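/- arXiv:2507.19996 — 3 statements merged into one kernel-verified Lean document; each statement's English description precedes it below -/
import Mathlib

section
/- Let K ≥ 1, d ≥ 1, m ≥ 1 be integers with K ≤ d and K ≤ m, let z : {1,…,K} → ℂ be injective (pairwise distinct nodes), and let b : {1,…,K} → ℂ with b_k ≠ 0 for every k. Define y ∈ ℂ^{d+m−1} by y[n] = Σ_{k=1}^K b_k z_k^n for n = 0,…,d+m−2. Then the d × m Hankel matrix H of y has rank exactly K. -/
open Matrix in

/-- If the nodes `z k` are pairwise distinct, the amplitudes `b k` are all nonzero,
and `K ≤ d`, `K ≤ m`, then the `d × m` Hankel matrix of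
`y n = ∑ k, b k * z k ^ n` has rank exactly `K`. -/
theorem hankel_rank_eq
    (K d m : ℕ) (hK : 1 ≤ K) (hd : 1 ≤ d) (hm : 1 ≤ m)
    (hKd : K ≤ d) (hKm : K ≤ m)
    (z : Fin K → ℂ) (hz : Function.Injective z)
    (b : Fin K → ℂ) (hb : ∀ k, b k ≠ 0)
    (y : ℕ → ℂ)
    (hy : ∀ n < d + m - 1, y n = ∑ k, b k * z k ^ n)
    (H : Matrix (Fin d) (Fin m) ℂ)
    (hH : ∀ (i : Fin d) (j : Fin m), H i j = y ((i : ℕ) + (j : ℕ))) :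
    H.rank = K := by
  classical
  set A : Matrix (Fin d) (Fin K) ℂ := fun i k => b k * z k ^ (i : ℕ) with hA
  set B : Matrix (Fin K) (Fin m) ℂ := fun k j => z k ^ (j : ℕ) with hB
  have hHAB : H = A * B := by
    ext i j
    have hlt : (i : ℕ) + (j : ℕ) < d + m - 1 := by omega
    rw [hH, hy _ hlt, Matrix.mul_apply]
    refine Finset.sum_congr rfl fun k _ => ?_
    simp [hA, hB, pow_add]
    ring
  -- the square left block of A is invertible
  set M : Matrix (Fin K) (Fin K) ℂ := fun i k => b k * z k ^ (i : ℕ) with hM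
  have hMdet : M.det ≠ 0 := by
    have hMfac : M = (Matrix.vandermonde z)ᵀ * Matrix.diagonal b := by
      ext i k
      simp [hM, Matrix.mul_apply, Matrix.diagonal, Matrix.vandermonde,
        Finset.sum_ite_eq' (Finset.univ : Finset (Fin K)) k]
      ring
    rw [hMfac, Matrix.det_mul, Matrix.det_transpose, Matrix.det_diagonal]
    exact mul_ne_zero (Matrix.det_vandermonde_ne_zero_iff.mpr hz)
      (Finset.prod_ne_zero_iff.mpr fun k _ => hb k)
  have hMunit : IsUnit M.det := isUnit_iff_ne_zero.mpr hMdet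
  -- injectivity of A.mulVecLin
  have hAinj : Function.Injective A.mulVecLin := by
    rw [← LinearMap.ker_eq_bot, LinearMap.ker_eq_bot']
    intro v hv
    have hMv : M.mulVec v = 0 := by
      funext i
      have : A.mulVec v (Fin.castLE hKd i) = 0 := by rw [Matrix.mulVecLin_apply] at hv; rw [hv]; rfl
      simpa [Matrix.mulVec, dotProduct, hA, hM] using this
    calc v = (M⁻¹ * M).mulVec v := by rw [Matrix.nonsing_inv_mul M hMunit, Matrix.one_mulVec]
    _ = M⁻¹.mulVec (M.mulVec v) := by rw [Matrix.mulVec_mulVec]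
    _ = 0 := by rw [hMv, Matrix.mulVec_zero]
  -- surjectivity of B.mulVecLin
  set V : Matrix (Fin K) (Fin K) ℂ := Matrix.vandermonde z with hV
  have hVdet : V.det ≠ 0 := Matrix.det_vandermonde_ne_zero_iff.mpr hz
  have hVunit : IsUnit V.det := isUnit_iff_ne_zero.mpr hVdet
  have hBsurj : Function.Surjective B.mulVecLin := by
    intro w
    set u : Fin K → ℂ := V⁻¹.mulVec w with hu
    refine ⟨fun j => if h : (j : ℕ) < K then u ⟨j, h⟩ else 0, ?_⟩
    have hVu : V.mulVec u = w := by
      rw [hu, Matrix.mulVec_mulVec, Matrix.mul_nonsing_inv V hVunit, Matrix.one_mulVec]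
    funext k
    rw [Matrix.mulVecLin_apply]
    have : B.mulVec (fun j => if h : (j : ℕ) < K then u ⟨j, h⟩ else 0) k
        = V.mulVec u k := by
      simp only [Matrix.mulVec, dotProduct]
      have h1 : ∑ x : Fin m, B k x * (if h : (x : ℕ) < K then u ⟨x, h⟩ else 0)
          = ∑ x ∈ Finset.univ.map (Fin.castLEEmb hKm),
              B k x * (if h : (x : ℕ) < K then u ⟨x, h⟩ else 0) := by
        refine (Finset.sum_subset (Finset.subset_univ _) ?_).symm
        intro x _ hx
        have hxK : ¬ (x : ℕ) < K := by
          intro hlt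
          exact hx (by
            simp only [Finset.mem_map, Finset.mem_univ, true_and]
            exact ⟨⟨x, hlt⟩, by ext; simp⟩)
        simp [hxK]
      rw [h1, Finset.sum_map]
      refine Finset.sum_congr rfl fun j _ => ?_
      simp [hB, hV, Matrix.vandermonde, j.isLt]
    rw [this, hVu]
  -- conclude
  rw [hHAB, Matrix.rank, Matrix.mulVecLin_mul, LinearMap.range_comp,
    LinearMap.range_eq_top.mpr hBsurj, Submodule.map_top,
    LinearMap.finrank_range_of_inj hAinj]
  simp
end

section
/- Let d ≥ 1, set N = 2d − 1, and let A_0,…,A_{N−1} ∈ ℝ^{d×d} be the Hankel lifting basis for the square d × d case. Then the (0,0) diagonal entry of the Gram matrix G = Σ_{n=0}^{N−1} A_n A_nᵀ equals the harmonic number H_d = Σ_{j=1}^{d} 1/j, and consequently G[0,0] ≤ 1 + log d. -/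
open Matrix

/-- The number of index pairs on the `n`-th antidiagonal of a `d × m` matrix. -/
def hankelCount (d m n : ℕ) : ℕ :=
  ((Finset.univ : Finset (Fin d × Fin m)).filter
    (fun p => (p.1 : ℕ) + (p.2 : ℕ) = n)).card

/-- The `n`-th element of the Hankel lifting basis for sizes `d × m`. -/
noncomputable def hankelBasis (d m : ℕ) (n : ℕ) : Matrix (Fin d) (Fin m) ℝ :=
  Matrix.of fun i j =>
    if (i : ℕ) + (j : ℕ) = n then 1 / Real.sqrt (hankelCount d m n) else 0

open Finset

lemma hankelCount_of_lt {d m n : ℕ} (hd : n < d) (hm : n < m) : hankelCount d m n = n + 1 := by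
  rw [hankelCount, ← Nat.card_antidiagonal n]
  refine card_nbij' (fun p => ((p.1 : ℕ), (p.2 : ℕ)))
    (fun p => if h : p.1 < d ∧ p.2 < m then (⟨p.1, h.1⟩, ⟨p.2, h.2⟩)
      else (⟨0, by omega⟩, ⟨0, by omega⟩))
    (fun p hp => by simpa using hp) (fun p hp => ?_) (fun p _ => by simp) (fun p hp => ?_) <;>
  · have hp : p.1 + p.2 = n := by simpa using hp
    simp [show p.1 < d ∧ p.2 < m by omega, hp]

/-- Row `0` of `A_n` has the single nonzero entry `1 / √s_n`, in column `n`. -/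
lemma hankelBasis_mul_transpose_zero_zero {d m : ℕ} (hd : 0 < d) (n : ℕ) :
    (hankelBasis d m n * (hankelBasis d m n)ᵀ) ⟨0, hd⟩ ⟨0, hd⟩
      = if n < m then (hankelCount d m n : ℝ)⁻¹ else 0 := by
  have hsq : 1 / √(hankelCount d m n : ℝ) * (1 / √(hankelCount d m n : ℝ))
      = (hankelCount d m n : ℝ)⁻¹ := by
    rw [div_mul_div_comm, Real.mul_self_sqrt (Nat.cast_nonneg _), one_mul, one_div]
  simp only [mul_apply, transpose_apply, hankelBasis, of_apply, zero_add, mul_ite, ite_mul,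
    mul_zero, zero_mul, ← ite_and, and_self, hsq]
  rw [Fin.sum_univ_eq_sum_range (fun j => if j = n then _ else 0), sum_ite_eq']
  simp only [mem_range]

lemma gram_zero_zero_eq_harmonic {d : ℕ} (hd : 0 < d) :
    (∑ n ∈ range (2 * d - 1), hankelBasis d d n * (hankelBasis d d n)ᵀ) ⟨0, hd⟩ ⟨0, hd⟩
      = harmonic d := by
  have hsub : range d ⊆ range (2 * d - 1) := range_subset_range.mpr (by omega)
  simp only [Matrix.sum_apply, hankelBasis_mul_transpose_zero_zero]
  calc ∑ n ∈ range (2 * d - 1), (if n < d then (hankelCount d d n : ℝ)⁻¹ else 0)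
      = ∑ n ∈ range d, (if n < d then (hankelCount d d n : ℝ)⁻¹ else 0) :=
        (sum_subset hsub fun n _ hn => if_neg (by simpa using hn)).symm
    _ = ∑ n ∈ range d, ((n + 1 : ℕ) : ℝ)⁻¹ :=
        sum_congr rfl fun n hn => by
          rw [mem_range] at hn
          rw [if_pos hn, hankelCount_of_lt hn hn]
    _ = harmonic d := by simp [harmonic]

/-- For the square `d × d` Hankel lifting basis (`N = 2d − 1`), the `(0,0)` entry
of the Gram matrix `G = ∑ n, A n (A n)ᵀ` equals the harmonic number
`H_d = ∑_{j=1}^d 1/j`, and hence is at most `1 + log d`. -/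
theorem gram_diagonal_harmonic
    (d : ℕ) (hd : 1 ≤ d) :
    (∑ n ∈ Finset.range (2 * d - 1),
        hankelBasis d d n * (hankelBasis d d n)ᵀ) ⟨0, hd⟩ ⟨0, hd⟩
      = ∑ j ∈ Finset.range d, (1 : ℝ) / (j + 1) ∧
    (∑ n ∈ Finset.range (2 * d - 1),
        hankelBasis d d n * (hankelBasis d d n)ᵀ) ⟨0, hd⟩ ⟨0, hd⟩
      ≤ 1 + Real.log d := by
  have h := gram_zero_zero_eq_harmonic hd
  refine ⟨h.trans ?_, h.trans_le (harmonic_le_one_add_log d)⟩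
  simp [harmonic]
end

section
/- Let d ≥ 1, set N = 2d − 1, and let A_0,…,A_{N−1} ∈ ℝ^{d×d} be the Hankel lifting basis for the square d × d case. Then there exist diagonal matrices W_L, W_R ∈ ℝ^{d×d} with nonnegative diagonal entries satisfying Σ_{i=1}^{d} (W_L)_{ii}² = 1 and Σ_{i=1}^{d} (W_R)_{ii}² = 1, such that Σ_{n=0}^{N−1} ( ‖W_L A_n‖_F² + ‖W_R A_nᵀ‖_F² ) ≤ 2(1 + log d). -/
open Matrix

lemma hankelCount_pos (d n : ℕ) (hd : 1 ≤ d) (hn : n < 2 * d - 1) :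
    0 < hankelCount d d n := by
  rw [hankelCount, Finset.card_pos]
  have hi : min n (d - 1) < d := lt_of_le_of_lt (min_le_right _ _) (by omega)
  have hj : n - min n (d - 1) < d := by omega
  exact ⟨(⟨min n (d - 1), hi⟩, ⟨n - min n (d - 1), hj⟩), by
    simp only [Finset.mem_filter, Finset.mem_univ, true_and]; omega⟩

lemma hankel_sumsq (d n : ℕ) (hd : 1 ≤ d) (hn : n < 2 * d - 1) :
    ∑ i : Fin d, ∑ j : Fin d, (hankelBasis d d n i j) ^ 2 = 1 := by
  have hc := hankelCount_pos d n hd hn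
  have hcR : (0 : ℝ) < (hankelCount d d n : ℝ) := by exact_mod_cast hc
  rw [← Finset.sum_product']
  have key : ∀ p : Fin d × Fin d, (hankelBasis d d n p.1 p.2) ^ 2 =
      if (p.1 : ℕ) + (p.2 : ℕ) = n then 1 / (hankelCount d d n : ℝ) else 0 := by
    intro p
    simp only [hankelBasis, Matrix.of_apply]
    split_ifs with h
    · rw [div_pow, one_pow, Real.sq_sqrt hcR.le]
    · ring
  calc ∑ p : Fin d × Fin d, (hankelBasis d d n p.1 p.2) ^ 2
      = ∑ p : Fin d × Fin d,
          (if (p.1 : ℕ) + (p.2 : ℕ) = n then 1 / (hankelCount d d n : ℝ) else 0) := by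
        exact Finset.sum_congr rfl fun p _ => key p
    _ = ∑ _p ∈ (Finset.univ : Finset (Fin d × Fin d)).filter
          (fun p => (p.1 : ℕ) + (p.2 : ℕ) = n), 1 / (hankelCount d d n : ℝ) := by
        rw [Finset.sum_filter]
    _ = (hankelCount d d n : ℝ) * (1 / (hankelCount d d n : ℝ)) := by
        rw [Finset.sum_const, nsmul_eq_mul]; rfl
    _ = 1 := by field_simp

/-- There exist diagonal weight matrices with nonnegative diagonal entries whose
squared diagonals lie in the probability simplex, making the total weighted
Frobenius energy of the square Hankel lifting basis at most `2(1 + log d)`. -/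
theorem optimal_weights_log_bound
    (d : ℕ) (hd : 1 ≤ d) :
    ∃ wL wR : Fin d → ℝ,
      (∀ i, 0 ≤ wL i) ∧ (∀ i, 0 ≤ wR i) ∧
      (∑ i, (wL i) ^ 2 = 1) ∧ (∑ i, (wR i) ^ 2 = 1) ∧
      ∑ n ∈ Finset.range (2 * d - 1),
        ((∑ i, ∑ j, ((Matrix.diagonal wL * hankelBasis d d n) i j) ^ 2) +
         (∑ i, ∑ j, ((Matrix.diagonal wR * (hankelBasis d d n)ᵀ) i j) ^ 2))
        ≤ 2 * (1 + Real.log d) := by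
  have hdR : (0 : ℝ) < (d : ℝ) := by exact_mod_cast hd
  set w : Fin d → ℝ := fun _ => (Real.sqrt d)⁻¹ with hw
  have hwsq : ∀ i : Fin d, (w i) ^ 2 = ((d : ℝ))⁻¹ := by
    intro i
    show ((Real.sqrt d)⁻¹ : ℝ) ^ 2 = ((d : ℝ))⁻¹
    rw [inv_pow, Real.sq_sqrt hdR.le]
  have hsum1 : ∑ i : Fin d, (w i) ^ 2 = 1 := by
    rw [Finset.sum_congr rfl (fun i _ => hwsq i), Finset.sum_const, Finset.card_univ,
      Fintype.card_fin, nsmul_eq_mul]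
    field_simp
  refine ⟨w, w, fun i => by positivity, fun i => by positivity, hsum1, hsum1, ?_⟩
  have hterm : ∀ n ∈ Finset.range (2 * d - 1),
      ((∑ i, ∑ j, ((Matrix.diagonal w * hankelBasis d d n) i j) ^ 2) +
       (∑ i, ∑ j, ((Matrix.diagonal w * (hankelBasis d d n)ᵀ) i j) ^ 2))
      = 2 / (d : ℝ) := by
    intro n hn
    rw [Finset.mem_range] at hn
    have hsq := hankel_sumsq d n hd hn
    have h1 : (∑ i, ∑ j, ((Matrix.diagonal w * hankelBasis d d n) i j) ^ 2)
        = ((d : ℝ))⁻¹ := by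
      have : ∀ i j : Fin d, ((Matrix.diagonal w * hankelBasis d d n) i j) ^ 2
          = ((d : ℝ))⁻¹ * (hankelBasis d d n i j) ^ 2 := by
        intro i j
        rw [Matrix.diagonal_mul, mul_pow, hwsq i]
      simp_rw [this, ← Finset.mul_sum]
      rw [hsq, mul_one]
    have h2 : (∑ i, ∑ j, ((Matrix.diagonal w * (hankelBasis d d n)ᵀ) i j) ^ 2)
        = ((d : ℝ))⁻¹ := by
      have : ∀ i j : Fin d, ((Matrix.diagonal w * (hankelBasis d d n)ᵀ) i j) ^ 2
          = ((d : ℝ))⁻¹ * (hankelBasis d d n j i) ^ 2 := by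
        intro i j
        rw [Matrix.diagonal_mul, mul_pow, hwsq i, Matrix.transpose_apply]
      simp_rw [this, ← Finset.mul_sum]
      rw [Finset.sum_comm, hsq, mul_one]
    rw [h1, h2]
    ring
  rw [Finset.sum_congr rfl hterm, Finset.sum_const, Finset.card_range, nsmul_eq_mul]
  have hcast : ((2 * d - 1 : ℕ) : ℝ) = 2 * (d : ℝ) - 1 := by
    have : (2 * d - 1 : ℕ) + 1 = 2 * d := by omega
    have := congrArg (Nat.cast : ℕ → ℝ) this
    push_cast at this
    linarith
  rw [hcast]
  have hlog : Real.log ((d : ℝ))⁻¹ ≤ ((d : ℝ))⁻¹ - 1 :=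
    Real.log_le_sub_one_of_pos (by positivity)
  rw [Real.log_inv] at hlog
  have hinv : ((d : ℝ))⁻¹ ≤ 1 := by
    rw [inv_le_one_iff₀]; right; exact_mod_cast hd
  have key : (2 * (d : ℝ) - 1) * (2 / (d : ℝ)) = 4 - 2 * ((d : ℝ))⁻¹ := by
    field_simp; ring
  rw [key]
  linarith
end
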